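/- Let μ be a positive Borel measure on [0,1) whose moments satisfy μ_n = O(n^{-(1+ε)}) for some ε > 0. Then the following are equivalent: (i) there exists C > 0 such that for every complex sequence (a_k)_{k≥0} with Σ_{k=0}^∞ (k+1)^{-1}|a_k|² < ∞ one has Σ_{n=0}^∞ (n+1) |Σ_{k=0}^∞ μ_{n+k} a_k|² ≤ C Σ_{k=0}^∞ (k+1)^{-1}|a_k|² (i.e., the Derivative-Hilbert operator DH_μ is bounded on the Bergman space A²); (ii) there exists C > 0 with μ([t,1)) ≤ C(1−t)² for all t ∈ [0,1) (μ is a 2-Carleson measure). -/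

import Mathlib

/-!
If `μ([t,1)) ≤ C (1 - t)²`, the layer cake formula gives
`μₙ = n ∫₀¹ sⁿ⁻¹ μ([s,1)) ds ≤ 2C / ((n + 1)(n + 2))`, and this bound telescopes to
`∑_{i ≥ j} μᵢ ≤ 2C / (j + 1)`. Schur's test for the Hankel matrix `(μ_{n+k})`, i.e. Cauchy–Schwarz
with the row sums and then with the column sums, bounds `DH_μ` on `A²` by `2C`.

Conversely, test the bound on `aₖ = (k + 1) tᵏ`, of squared norm `(1 - t²)⁻²`. Since
`μ_{n+k} ≥ t^{n+k} μ([t,1))`, the `n`-th coefficient of `DH_μ f` is at least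
`(n + 1) tⁿ μ([t,1)) (1 - t²)⁻²`, so `μ([t,1))² (1 - t²)⁻⁶ ≤ C (1 - t²)⁻²`. The decay
`μₙ = O(n^{-1-ε})` makes the series for `‖DH_μ f‖²` converge, so that this lower bound is
meaningful.
-/

open MeasureTheory

/-- The `n`-th moment of a positive Borel measure on `[0,1)`. -/
noncomputable def moment (μ : Measure ℝ) (n : ℕ) : ℝ :=
  ∫ t in Set.Ico (0 : ℝ) 1, t ^ n ∂μ

open Set

/-- `bergmanNormSq a` is `‖f‖²` in `A² = D_2` for `f = ∑ aₖ zᵏ`. -/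
noncomputable def bergmanNormSq (a : ℕ → ℂ) : ℝ :=
  ∑' k : ℕ, ((k : ℝ) + 1)⁻¹ * ‖a k‖ ^ 2

/-- `derivHilbertNormSq m a` is `‖DH f‖²` in `A²` for `f = ∑ aₖ zᵏ`, where `DH` is the
Derivative-Hilbert operator with moment sequence `m`. -/
noncomputable def derivHilbertNormSq (m : ℕ → ℝ) (a : ℕ → ℂ) : ℝ :=
  ∑' n : ℕ, ((n : ℝ) + 1) * ‖∑' k : ℕ, (m (n + k) : ℂ) * a k‖ ^ 2

lemma summable_mul_of_summable_mul_sq {w b : ℕ → ℝ} (hw : ∀ k, 0 ≤ w k) (hws : Summable w)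
    (hwb : Summable fun k => w k * b k ^ 2) : Summable fun k => w k * b k := by
  refine Summable.of_norm_bounded (hws.add hwb) fun k => ?_
  have hb : |b k| ≤ 1 + b k ^ 2 := by nlinarith [abs_nonneg (b k), sq_abs (b k)]
  rw [Real.norm_eq_abs, abs_mul, abs_of_nonneg (hw k)]
  nlinarith [hw k]

lemma sq_tsum_mul_le {w b : ℕ → ℝ} (hw : ∀ k, 0 ≤ w k) (hws : Summable w)
    (hwb : Summable fun k => w k * b k ^ 2) :
    (∑' k, w k * b k) ^ 2 ≤ (∑' k, w k) * ∑' k, w k * b k ^ 2 :=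
  le_of_tendsto_of_tendsto'
    ((summable_mul_of_summable_mul_sq hw hws hwb).hasSum.tendsto_sum_nat.pow 2)
    (hws.hasSum.tendsto_sum_nat.mul hwb.hasSum.tendsto_sum_nat)
    fun N => Finset.sum_sq_le_sum_mul_sum_of_sq_le_mul _ (fun k _ => hw k)
      (fun k _ => mul_nonneg (hw k) (sq_nonneg _)) fun k _ => (by ring : _ = _).le

lemma sum_range_shift_le_of_le_div {m : ℕ → ℝ} {B : ℝ} (hm0 : ∀ n, 0 ≤ m n)
    (hm : ∀ n : ℕ, m n ≤ B / (((n : ℝ) + 1) * (n + 2))) (j N : ℕ) :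
    ∑ i ∈ Finset.range N, m (j + i) ≤ B / ((j : ℝ) + 1) := by
  have hB : 0 ≤ B := by have := (hm0 0).trans (hm 0); norm_num at this; linarith
  have htel : ∀ i : ℕ, m (j + i) ≤ B / ((j : ℝ) + i + 1) - B / ((j : ℝ) + (i + 1 : ℕ) + 1) := by
    intro i
    convert hm (j + i) using 1
    push_cast
    field_simp
    ring
  calc ∑ i ∈ Finset.range N, m (j + i)
      ≤ ∑ i ∈ Finset.range N, (B / ((j : ℝ) + i + 1) - B / ((j : ℝ) + (i + 1 : ℕ) + 1)) :=
        Finset.sum_le_sum fun i _ => htel i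
    _ = B / ((j : ℝ) + 1) - B / ((j : ℝ) + N + 1) := by
        rw [Finset.sum_range_sub' (fun i : ℕ => B / ((j : ℝ) + i + 1))]
        simp
    _ ≤ B / ((j : ℝ) + 1) := by
        have : 0 ≤ B / ((j : ℝ) + N + 1) := by positivity
        linarith

lemma summable_of_le_div {m : ℕ → ℝ} {B : ℝ} (hm0 : ∀ n, 0 ≤ m n)
    (hm : ∀ n : ℕ, m n ≤ B / (((n : ℝ) + 1) * (n + 2))) : Summable m :=
  summable_of_sum_range_le hm0 fun N => by simpa using sum_range_shift_le_of_le_div hm0 hm 0 N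

lemma tsum_shift_le_of_le_div {m : ℕ → ℝ} {B : ℝ} (hm0 : ∀ n, 0 ≤ m n)
    (hm : ∀ n : ℕ, m n ≤ B / (((n : ℝ) + 1) * (n + 2))) (j : ℕ) :
    ∑' i, m (j + i) ≤ B / ((j : ℝ) + 1) :=
  Real.tsum_le_of_sum_range_le (fun _ => hm0 _) (sum_range_shift_le_of_le_div hm0 hm j)

lemma summable_succ_mul_sq_of_le_rpow {m : ℕ → ℝ} (hm0 : ∀ n, 0 ≤ m n) {ε C : ℝ} (hε : 0 < ε)
    (hm : ∀ n : ℕ, 1 ≤ n → m n ≤ C * (n : ℝ) ^ (-(1 + ε))) :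
    Summable fun n : ℕ => ((n : ℝ) + 1) * m n ^ 2 := by
  refine Summable.of_norm_bounded_eventually_nat
    (((Real.summable_nat_rpow (p := -(1 + 2 * ε))).mpr (by linarith)).mul_left (2 * C ^ 2)) ?_
  filter_upwards [Filter.eventually_ge_atTop 1] with n hn
  have hn0 : (0 : ℝ) < n := by exact_mod_cast hn
  have hrpow : (n : ℝ) * ((n : ℝ) ^ (-(1 + ε))) ^ 2 = (n : ℝ) ^ (-(1 + 2 * ε)) := by
    rw [← Real.rpow_mul_natCast hn0.le, ← Real.rpow_one_add' hn0.le (by push_cast; linarith)]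
    push_cast
    ring_nf
  have hsq : m n ^ 2 ≤ (C * (n : ℝ) ^ (-(1 + ε))) ^ 2 := pow_le_pow_left₀ (hm0 n) (hm n hn) 2
  rw [Real.norm_of_nonneg (by have := hm0 n; positivity)]
  calc ((n : ℝ) + 1) * m n ^ 2 ≤ (2 * n) * (C * (n : ℝ) ^ (-(1 + ε))) ^ 2 := by
        have : (1 : ℝ) ≤ n := by exact_mod_cast hn
        gcongr
        linarith
    _ = 2 * C ^ 2 * ((n : ℝ) * ((n : ℝ) ^ (-(1 + ε))) ^ 2) := by ring
    _ = 2 * C ^ 2 * (n : ℝ) ^ (-(1 + 2 * ε)) := by rw [hrpow]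

lemma hasSum_succ_mul_geometric {r : ℝ} (hr : |r| < 1) :
    HasSum (fun n : ℕ => ((n : ℝ) + 1) * r ^ n) (1 / (1 - r) ^ 2) := by
  simpa using hasSum_choose_mul_geometric_of_norm_lt_one 1 (r := r) (by simpa using hr)

section Hankel

variable {m : ℕ → ℝ} {B : ℝ}

lemma summable_shift (hm : Summable m) (j : ℕ) : Summable fun i => m (j + i) := by
  simpa only [add_comm] using (summable_nat_add_iff j).mpr hm

lemma sum_shift_le_of_tsum_shift_le (hm0 : ∀ n, 0 ≤ m n) (hm : Summable m)
    (htail : ∀ j : ℕ, ∑' i, m (j + i) ≤ B / ((j : ℝ) + 1)) (F : Finset ℕ) (k : ℕ) :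
    ∑ n ∈ F, m (n + k) ≤ B / ((k : ℝ) + 1) :=
  calc ∑ n ∈ F, m (n + k) = ∑ n ∈ F, m (k + n) := by simp only [add_comm]
    _ ≤ ∑' n, m (k + n) := (summable_shift hm k).sum_le_tsum F fun n _ => hm0 _
    _ ≤ B / ((k : ℝ) + 1) := htail k

lemma succ_mul_norm_tsum_sq_le (hm0 : ∀ n, 0 ≤ m n) (hm : Summable m)
    (htail : ∀ j : ℕ, ∑' i, m (j + i) ≤ B / ((j : ℝ) + 1)) {a : ℕ → ℂ} (n : ℕ)
    (hQ : Summable fun k => m (n + k) * ‖a k‖ ^ 2) :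
    ((n : ℝ) + 1) * ‖∑' k, (m (n + k) : ℂ) * a k‖ ^ 2 ≤ B * ∑' k, m (n + k) * ‖a k‖ ^ 2 := by
  have hnorm : ∀ k, ‖(m (n + k) : ℂ) * a k‖ = m (n + k) * ‖a k‖ := fun k => by
    rw [norm_mul, Complex.norm_real, Real.norm_of_nonneg (hm0 _)]
  have hsum := summable_mul_of_summable_mul_sq (fun k => hm0 (n + k)) (summable_shift hm n) hQ
  have hS : ‖∑' k, (m (n + k) : ℂ) * a k‖ ≤ ∑' k, m (n + k) * ‖a k‖ := by
    simpa only [hnorm] using norm_tsum_le_tsum_norm (hsum.congr fun k => (hnorm k).symm)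
  calc ((n : ℝ) + 1) * ‖∑' k, (m (n + k) : ℂ) * a k‖ ^ 2
      ≤ ((n : ℝ) + 1) * ((∑' k, m (n + k)) * ∑' k, m (n + k) * ‖a k‖ ^ 2) := by
        gcongr
        exact (pow_le_pow_left₀ (norm_nonneg _) hS 2).trans
          (sq_tsum_mul_le (fun k => hm0 _) (summable_shift hm n) hQ)
    _ ≤ ((n : ℝ) + 1) * (B / ((n : ℝ) + 1) * ∑' k, m (n + k) * ‖a k‖ ^ 2) := by
        gcongr
        · exact tsum_nonneg fun k => mul_nonneg (hm0 _) (sq_nonneg _)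
        · exact htail n
    _ = B * ∑' k, m (n + k) * ‖a k‖ ^ 2 := by field_simp

/-- Schur's test for the Hankel matrix `(m (n + k))` with the weights `(n + 1)`. -/
theorem derivHilbertNormSq_le (hm0 : ∀ n, 0 ≤ m n) (hm : Summable m)
    (htail : ∀ j : ℕ, ∑' i, m (j + i) ≤ B / ((j : ℝ) + 1)) {a : ℕ → ℂ}
    (ha : Summable fun k : ℕ => ((k : ℝ) + 1)⁻¹ * ‖a k‖ ^ 2) :
    derivHilbertNormSq m a ≤ B ^ 2 * bergmanNormSq a := by
  have hB : 0 ≤ B := by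
    simpa using (tsum_nonneg fun i => hm0 (0 + i)).trans (htail 0)
  have hcol : ∀ F : Finset ℕ, ∀ k, ∑ n ∈ F, m (n + k) * ‖a k‖ ^ 2 ≤
      B * (((k : ℝ) + 1)⁻¹ * ‖a k‖ ^ 2) := by
    intro F k
    rw [← Finset.sum_mul, ← mul_assoc, ← div_eq_mul_inv]
    exact mul_le_mul_of_nonneg_right (sum_shift_le_of_tsum_shift_le hm0 hm htail F k) (sq_nonneg _)
  have hcol_summable : ∀ F : Finset ℕ, Summable fun k => ∑ n ∈ F, m (n + k) * ‖a k‖ ^ 2 :=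
    fun F => (ha.mul_left B).of_nonneg_of_le
      (fun k => Finset.sum_nonneg fun n _ => mul_nonneg (hm0 _) (sq_nonneg _)) (hcol F)
  have hQ : ∀ n, Summable fun k => m (n + k) * ‖a k‖ ^ 2 := fun n => by
    simpa using hcol_summable {n}
  refine tsum_le_of_sum_le' (mul_nonneg (sq_nonneg B) (tsum_nonneg fun k => by positivity))
    fun F => ?_
  calc ∑ n ∈ F, ((n : ℝ) + 1) * ‖∑' k, (m (n + k) : ℂ) * a k‖ ^ 2
      ≤ B * ∑' k, ∑ n ∈ F, m (n + k) * ‖a k‖ ^ 2 := by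
        rw [(Summable.tsum_finsetSum fun n _ => hQ n), Finset.mul_sum]
        exact Finset.sum_le_sum fun n _ => succ_mul_norm_tsum_sq_le hm0 hm htail n (hQ n)
    _ ≤ B * ∑' k : ℕ, B * (((k : ℝ) + 1)⁻¹ * ‖a k‖ ^ 2) :=
        mul_le_mul_of_nonneg_left
          (Summable.tsum_le_tsum (hcol F) (hcol_summable F) (ha.mul_left B)) hB
    _ = B ^ 2 * bergmanNormSq a := by rw [tsum_mul_left, bergmanNormSq]; ring

end Hankel

section Geometric

variable {m : ℕ → ℝ} {t : ℝ}

lemma summable_shift_mul_succ_geometric (hm0 : ∀ n, 0 ≤ m n) (hanti : Antitone m)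
    (ht0 : 0 ≤ t) (ht1 : t < 1) (n : ℕ) :
    Summable fun k : ℕ => m (n + k) * (((k : ℝ) + 1) * t ^ k) :=
  ((hasSum_succ_mul_geometric (by rwa [abs_of_nonneg ht0])).summable.mul_left (m n)).of_nonneg_of_le
    (fun k => mul_nonneg (hm0 _) (by positivity))
    fun k => mul_le_mul_of_nonneg_right (hanti (Nat.le_add_right n k)) (by positivity)

lemma tsum_shift_mul_succ_geometric_le (hm0 : ∀ n, 0 ≤ m n) (hanti : Antitone m)
    (ht0 : 0 ≤ t) (ht1 : t < 1) (n : ℕ) :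
    ∑' k : ℕ, m (n + k) * (((k : ℝ) + 1) * t ^ k) ≤ m n / (1 - t) ^ 2 := by
  have hgeom := hasSum_succ_mul_geometric (r := t) (by rwa [abs_of_nonneg ht0])
  rw [← mul_one_div, ← hgeom.tsum_eq, ← tsum_mul_left]
  exact Summable.tsum_le_tsum
    (fun k => mul_le_mul_of_nonneg_right (hanti (Nat.le_add_right n k)) (by positivity))
    (summable_shift_mul_succ_geometric hm0 hanti ht0 ht1 n) (hgeom.summable.mul_left _)

lemma le_tsum_shift_mul_succ_geometric (hm0 : ∀ n, 0 ≤ m n) (hanti : Antitone m)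
    (ht0 : 0 ≤ t) (ht1 : t < 1) {M : ℝ} (hM : ∀ j, t ^ j * M ≤ m j) (n : ℕ) :
    t ^ n * M / (1 - t ^ 2) ^ 2 ≤ ∑' k : ℕ, m (n + k) * (((k : ℝ) + 1) * t ^ k) := by
  have hgeom := hasSum_succ_mul_geometric (r := t ^ 2) (by
    rw [abs_of_nonneg (by positivity)]; nlinarith)
  rw [← mul_one_div, ← hgeom.tsum_eq, ← tsum_mul_left]
  refine Summable.tsum_le_tsum (fun k => ?_) (hgeom.summable.mul_left _)
    (summable_shift_mul_succ_geometric hm0 hanti ht0 ht1 n)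
  calc t ^ n * M * (((k : ℝ) + 1) * (t ^ 2) ^ k) = t ^ (n + k) * M * (((k : ℝ) + 1) * t ^ k) := by
        ring
    _ ≤ m (n + k) * (((k : ℝ) + 1) * t ^ k) :=
        mul_le_mul_of_nonneg_right (hM _) (by positivity)

/-- The Taylor coefficients of `(1 - t z)⁻²`. -/
noncomputable def succMulPow (t : ℝ) (k : ℕ) : ℂ := (((k : ℝ) + 1) * t ^ k : ℝ)

lemma hasSum_bergman_succMulPow (ht : |t| < 1) :
    HasSum (fun k : ℕ => ((k : ℝ) + 1)⁻¹ * ‖succMulPow t k‖ ^ 2) (1 / (1 - t ^ 2) ^ 2) := by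
  have hgeom := hasSum_succ_mul_geometric (r := t ^ 2) (by
    rw [abs_of_nonneg (sq_nonneg t), ← sq_abs]; nlinarith [abs_nonneg t])
  refine hgeom.congr_fun fun k => ?_
  rw [succMulPow, Complex.norm_real, Real.norm_eq_abs, sq_abs]
  field_simp
  ring

lemma derivHilbertNormSq_succMulPow :
    derivHilbertNormSq m (succMulPow t) =
      ∑' n : ℕ, ((n : ℝ) + 1) * (∑' k : ℕ, m (n + k) * (((k : ℝ) + 1) * t ^ k)) ^ 2 := by
  refine tsum_congr fun n => ?_
  rw [show ∑' k : ℕ, (m (n + k) : ℂ) * succMulPow t k =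
      ((∑' k : ℕ, m (n + k) * (((k : ℝ) + 1) * t ^ k) : ℝ) : ℂ) by
    push_cast [succMulPow, Complex.ofReal_tsum]; rfl,
    Complex.norm_real, Real.norm_eq_abs, sq_abs]

lemma summable_succ_mul_sq_tsum_shift (hm0 : ∀ n, 0 ≤ m n) (hanti : Antitone m)
    (hsq : Summable fun n : ℕ => ((n : ℝ) + 1) * m n ^ 2) (ht0 : 0 ≤ t) (ht1 : t < 1) :
    Summable fun n : ℕ =>
      ((n : ℝ) + 1) * (∑' k : ℕ, m (n + k) * (((k : ℝ) + 1) * t ^ k)) ^ 2 := by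
  refine (hsq.mul_left (1 / (1 - t) ^ 4)).of_nonneg_of_le (fun n => by positivity) fun n => ?_
  have hR0 : 0 ≤ ∑' k : ℕ, m (n + k) * (((k : ℝ) + 1) * t ^ k) :=
    tsum_nonneg fun k => mul_nonneg (hm0 _) (by positivity)
  have := pow_le_pow_left₀ hR0 (tsum_shift_mul_succ_geometric_le hm0 hanti ht0 ht1 n) 2
  calc ((n : ℝ) + 1) * (∑' k : ℕ, m (n + k) * (((k : ℝ) + 1) * t ^ k)) ^ 2
      ≤ ((n : ℝ) + 1) * (m n / (1 - t) ^ 2) ^ 2 := by gcongr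
    _ = 1 / (1 - t) ^ 4 * (((n : ℝ) + 1) * m n ^ 2) := by rw [div_pow, ← pow_mul]; ring

lemma div_le_derivHilbertNormSq_succMulPow (hm0 : ∀ n, 0 ≤ m n) (hanti : Antitone m)
    (hsq : Summable fun n : ℕ => ((n : ℝ) + 1) * m n ^ 2) (ht0 : 0 ≤ t) (ht1 : t < 1) {M : ℝ}
    (hM0 : 0 ≤ M) (hM : ∀ j, t ^ j * M ≤ m j) :
    M ^ 2 / (1 - t ^ 2) ^ 6 ≤ derivHilbertNormSq m (succMulPow t) := by
  have hgeom := hasSum_succ_mul_geometric (r := t ^ 2) (by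
    rw [abs_of_nonneg (by positivity)]; nlinarith)
  have hu : 0 < 1 - t ^ 2 := by nlinarith
  rw [derivHilbertNormSq_succMulPow]
  calc M ^ 2 / (1 - t ^ 2) ^ 6
      = ∑' n : ℕ, M ^ 2 / (1 - t ^ 2) ^ 4 * (((n : ℝ) + 1) * (t ^ 2) ^ n) := by
        rw [tsum_mul_left, hgeom.tsum_eq]; field_simp
    _ ≤ _ := by
        refine Summable.tsum_le_tsum (fun n => ?_) (hgeom.summable.mul_left _)
          (summable_succ_mul_sq_tsum_shift hm0 hanti hsq ht0 ht1)
        have := pow_le_pow_left₀ (by positivity)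
          (le_tsum_shift_mul_succ_geometric hm0 hanti ht0 ht1 hM n) 2
        calc M ^ 2 / (1 - t ^ 2) ^ 4 * (((n : ℝ) + 1) * (t ^ 2) ^ n)
            = ((n : ℝ) + 1) * (t ^ n * M / (1 - t ^ 2) ^ 2) ^ 2 := by
              rw [div_pow, ← pow_mul]; ring
          _ ≤ _ := by gcongr

theorem le_sqrt_mul_of_derivHilbertNormSq_le {C M : ℝ} (hm0 : ∀ n, 0 ≤ m n)
    (hanti : Antitone m) (hsq : Summable fun n : ℕ => ((n : ℝ) + 1) * m n ^ 2)
    (hbdd : ∀ a : ℕ → ℂ, Summable (fun k : ℕ => ((k : ℝ) + 1)⁻¹ * ‖a k‖ ^ 2) →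
      derivHilbertNormSq m a ≤ C * bergmanNormSq a)
    (ht0 : 0 ≤ t) (ht1 : t < 1) (hM0 : 0 ≤ M) (hM : ∀ j, t ^ j * M ≤ m j) :
    M ≤ √C * (1 - t ^ 2) ^ 2 := by
  have hu : 0 < 1 - t ^ 2 := by nlinarith
  have htest := hasSum_bergman_succMulPow (t := t) (by rw [abs_of_nonneg ht0]; exact ht1)
  have hbound := (div_le_derivHilbertNormSq_succMulPow hm0 hanti hsq ht0 ht1 hM0 hM).trans
    ((hbdd _ htest.summable).trans_eq (by rw [bergmanNormSq, htest.tsum_eq]))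
  have hM2 : M ^ 2 ≤ C * ((1 - t ^ 2) ^ 2) ^ 2 := by
    rw [div_le_iff₀ (by positivity)] at hbound
    field_simp at hbound
    nlinarith
  calc M = √(M ^ 2) := (Real.sqrt_sq hM0).symm
    _ ≤ √(C * ((1 - t ^ 2) ^ 2) ^ 2) := Real.sqrt_le_sqrt hM2
    _ = √C * (1 - t ^ 2) ^ 2 := by
        rw [Real.sqrt_mul' _ (by positivity), Real.sqrt_sq (by positivity)]

end Geometric

section Moment

lemma moment_nonneg (μ : Measure ℝ) (n : ℕ) : 0 ≤ moment μ n :=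
  setIntegral_nonneg measurableSet_Ico fun _ ht => pow_nonneg ht.1 n

variable (μ : Measure ℝ) [IsFiniteMeasure μ]

lemma integrableOn_pow_Ico (n : ℕ) : IntegrableOn (fun t : ℝ => t ^ n) (Ico 0 1) μ :=
  (continuous_pow n).integrableOn_Icc.mono_set Ico_subset_Icc_self

lemma moment_antitone : Antitone (moment μ) := fun _ _ hmn =>
  setIntegral_mono_on (integrableOn_pow_Ico μ _) (integrableOn_pow_Ico μ _) measurableSet_Ico
    fun _ ht => pow_le_pow_of_le_one ht.1 ht.2.le hmn

lemma pow_mul_measure_Ico_le_moment {t : ℝ} (ht : 0 ≤ t) (n : ℕ) :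
    t ^ n * (μ (Ico t 1)).toReal ≤ moment μ n := by
  have hsub : Ico t 1 ⊆ Ico 0 1 := Ico_subset_Ico_left ht
  calc t ^ n * (μ (Ico t 1)).toReal = ∫ _ in Ico t 1, t ^ n ∂μ := by
        rw [setIntegral_const, smul_eq_mul, mul_comm, measureReal_def]
    _ ≤ ∫ s in Ico t 1, s ^ n ∂μ :=
        setIntegral_mono_on (integrableOn_const (measure_ne_top μ _))
          ((integrableOn_pow_Ico μ n).mono_set hsub) measurableSet_Ico
          fun s hs => pow_le_pow_left₀ ht hs.1 n
    _ ≤ moment μ n :=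
        setIntegral_mono_set (integrableOn_pow_Ico μ n)
          (ae_restrict_of_forall_mem measurableSet_Ico fun s hs => pow_nonneg hs.1 n)
          hsub.eventuallyLE

lemma ofReal_moment_succ_eq_lintegral (k : ℕ) :
    ENNReal.ofReal (moment μ (k + 1)) =
      ∫⁻ s in Ioi 0, μ (Ico s 1) * ENNReal.ofReal (((k : ℝ) + 1) * s ^ k) := by
  have hpow : ∀ x : ℝ, ∫ s in (0 : ℝ)..x, ((k : ℝ) + 1) * s ^ k = x ^ (k + 1) := fun x => by
    rw [intervalIntegral.integral_const_mul, integral_pow]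
    field_simp
    simp
  have hnn : 0 ≤ᵐ[μ.restrict (Ico 0 1)] fun x : ℝ => x :=
    ae_restrict_of_forall_mem measurableSet_Ico fun x hx => hx.1
  have layer := lintegral_comp_eq_lintegral_meas_le_mul (μ.restrict (Ico 0 1)) hnn
    aemeasurable_id (g := fun s => ((k : ℝ) + 1) * s ^ k)
    (fun _ _ => by apply Continuous.intervalIntegrable; fun_prop)
    (ae_restrict_of_forall_mem measurableSet_Ioi fun s hs =>
      mul_nonneg (by positivity) (pow_nonneg (le_of_lt hs) _))
  simp only [hpow] at layer
  rw [moment, ofReal_integral_eq_lintegral_ofReal (integrableOn_pow_Ico μ (k + 1))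
    (hnn.mono fun x hx => pow_nonneg hx _), layer]
  refine setLIntegral_congr_fun measurableSet_Ioi fun s hs => ?_
  rw [Measure.restrict_apply' measurableSet_Ico, show {a : ℝ | s ≤ a} ∩ Ico 0 1 = Ico s 1 by
    ext x
    simp only [mem_inter_iff, mem_ofPred_eq, mem_Ico]
    exact ⟨fun h => ⟨h.1, h.2.2⟩, fun h => ⟨h.1, (le_of_lt hs).trans h.1, h.2⟩⟩]

lemma integral_one_sub_sq_mul_pow (k : ℕ) :
    ∫ s in (0 : ℝ)..1, (1 - s) ^ 2 * (((k : ℝ) + 1) * s ^ k) = 2 / (((k : ℝ) + 2) * (k + 3)) := by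
  have e : ∀ s : ℝ, (1 - s) ^ 2 * (((k : ℝ) + 1) * s ^ k) =
      ((k : ℝ) + 1) * s ^ k - 2 * ((k : ℝ) + 1) * s ^ (k + 1) + ((k : ℝ) + 1) * s ^ (k + 2) := by
    intro s; ring
  simp_rw [e]
  rw [intervalIntegral.integral_add, intervalIntegral.integral_sub,
    intervalIntegral.integral_const_mul, intervalIntegral.integral_const_mul,
    intervalIntegral.integral_const_mul]
  · simp only [integral_pow]; push_cast; field_simp; ring
  all_goals apply Continuous.intervalIntegrable; fun_prop

lemma lintegral_measure_Ico_mul_le {C : ℝ} (hC0 : 0 ≤ C)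
    (hC : ∀ t ∈ Ico (0 : ℝ) 1, (μ (Ico t 1)).toReal ≤ C * (1 - t) ^ 2) (k : ℕ) :
    ∫⁻ s in Ioi 0, μ (Ico s 1) * ENNReal.ofReal (((k : ℝ) + 1) * s ^ k) ≤
      ENNReal.ofReal (C * (2 / (((k : ℝ) + 2) * (k + 3)))) := by
  have hpt : ∀ s ∈ Ioi (0 : ℝ), μ (Ico s 1) * ENNReal.ofReal (((k : ℝ) + 1) * s ^ k) ≤
      (Iio 1).indicator
        (fun s => ENNReal.ofReal (C * ((1 - s) ^ 2 * (((k : ℝ) + 1) * s ^ k)))) s := by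
    intro s hs
    by_cases hs1 : s < 1
    · rw [indicator_of_mem (show s ∈ Iio 1 from hs1), ← mul_assoc,
        ENNReal.ofReal_mul (p := C * (1 - s) ^ 2) (by positivity)]
      refine mul_le_mul_left (?_ : μ (Ico s 1) ≤ _) _
      rw [← ENNReal.ofReal_toReal (measure_ne_top μ _)]
      exact ENNReal.ofReal_le_ofReal (hC s ⟨le_of_lt hs, hs1⟩)
    · rw [Ico_eq_empty hs1, measure_empty, zero_mul]
      exact bot_le
  refine (setLIntegral_mono' measurableSet_Ioi hpt).trans_eq ?_
  rw [lintegral_indicator measurableSet_Iio, Measure.restrict_restrict measurableSet_Iio,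
    Iio_inter_Ioi, ← ofReal_integral_eq_lintegral_ofReal, ← integral_Ioc_eq_integral_Ioo,
    ← intervalIntegral.integral_of_le zero_le_one, intervalIntegral.integral_const_mul,
    integral_one_sub_sq_mul_pow]
  · exact (Continuous.integrableOn_Icc (by fun_prop)).mono_set Ioo_subset_Icc_self
  · exact ae_restrict_of_forall_mem measurableSet_Ioo fun s hs => by
      have := hs.1.le
      positivity

lemma moment_le_of_carleson {C : ℝ}
    (hC : ∀ t ∈ Ico (0 : ℝ) 1, (μ (Ico t 1)).toReal ≤ C * (1 - t) ^ 2) (n : ℕ) :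
    moment μ n ≤ 2 * C / (((n : ℝ) + 1) * (n + 2)) := by
  have hmass : (μ (Ico 0 1)).toReal ≤ C := by simpa using hC 0 ⟨le_rfl, one_pos⟩
  have hC0 : 0 ≤ C := ENNReal.toReal_nonneg.trans hmass
  cases n with
  | zero => simpa [moment, measureReal_def] using hmass
  | succ k =>
    have key := (ofReal_moment_succ_eq_lintegral μ k).trans_le
      (lintegral_measure_Ico_mul_le μ hC0 hC k)
    rw [ENNReal.ofReal_le_ofReal_iff (by positivity)] at key
    convert key using 1
    push_cast
    ring

end Moment

/-- The Derivative-Hilbert operator `DH_μ` is bounded on the Bergman space `A² = D_2`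
if and only if `μ` is a `2`-Carleson measure. -/
theorem stmt_7 (μ : Measure ℝ) [IsFiniteMeasure μ]
    (hmom : ∃ ε > (0 : ℝ), ∃ C > (0 : ℝ), ∀ n : ℕ, 1 ≤ n →
      moment μ n ≤ C * (n : ℝ) ^ (-(1 + ε))) :
    (∃ C > (0 : ℝ), ∀ a : ℕ → ℂ,
        Summable (fun k : ℕ => ((k : ℝ) + 1)⁻¹ * ‖a k‖ ^ 2) →
        ∑' n : ℕ, ((n : ℝ) + 1) * ‖∑' k : ℕ, (moment μ (n + k) : ℂ) * a k‖ ^ 2 ≤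
          C * ∑' k : ℕ, ((k : ℝ) + 1)⁻¹ * ‖a k‖ ^ 2) ↔
      (∃ C > (0 : ℝ), ∀ t ∈ Set.Ico (0 : ℝ) 1,
        (μ (Set.Ico t 1)).toReal ≤ C * (1 - t) ^ 2) := by
  constructor
  · rintro ⟨C, hC, hbdd⟩
    obtain ⟨ε, hε, _, -, hm⟩ := hmom
    refine ⟨4 * √C, by positivity, fun t ⟨ht0, ht1⟩ => ?_⟩
    have hsq := summable_succ_mul_sq_of_le_rpow (moment_nonneg μ) hε hm
    calc (μ (Ico t 1)).toReal ≤ √C * (1 - t ^ 2) ^ 2 :=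
          le_sqrt_mul_of_derivHilbertNormSq_le (moment_nonneg μ) (moment_antitone μ) hsq hbdd
            ht0 ht1 ENNReal.toReal_nonneg (pow_mul_measure_Ico_le_moment μ ht0)
      _ = √C * (1 + t) ^ 2 * (1 - t) ^ 2 := by ring
      _ ≤ √C * 2 ^ 2 * (1 - t) ^ 2 := by gcongr; linarith
      _ = 4 * √C * (1 - t) ^ 2 := by ring
  · rintro ⟨C, hC, hcarleson⟩
    have hdecay := moment_le_of_carleson μ hcarleson
    exact ⟨(2 * C) ^ 2, by positivity, fun a ha =>
      derivHilbertNormSq_le (moment_nonneg μ) (summable_of_le_div (moment_nonneg μ) hdecay)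
        (tsum_shift_le_of_le_div (moment_nonneg μ) hdecay) ha⟩
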